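/- Let a>0 and 0 ≤ β_1 < β < β_2 ≤ 1. Let Ω : ℝ^d → ℝ be homogeneous of degree 0 (Ω(tx) = Ω(x) for all t>0, x≠0) with ∫_{S^{d-1}} |Ω|^s dσ < ∞ for some s>1. Then there is a constant C (independent of f and x) such that for all f ∈ L¹_loc(γ) and all x ∈ ℝ^d: |I_{Ω,β}^a(f)(x)| ≤ C [M_{Ω,β_1}^{2a}(f)(x)]^{(β_2−β)/(β_2−β_1)} · [M_{Ω,β_2}^{2a}(f)(x)]^{(β−β_1)/(β_2−β_1)}. -/

import Mathlib

/-!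
Hedberg's argument. Put `R = a m(x)` and cut `B(x, R)` into the dyadic annuli
`2⁻ᵏ⁻¹R ≤ |x - y| < 2⁻ᵏR`. On `B(x, R)` the Gaussian density differs from its value at `x` by a
factor at most `exp (± a (2 + a))`, so `γ(B(x, 2⁻ᵏR)) ≍ c qᵏ` with `q = 2⁻ᵈ`. On the `k`-th annulus
the kernel `γ(B(x,|x-y|))^(β-1)` is at most `γ(B(x, 2⁻ᵏ⁻¹R))^(β-1)`, and since `B(x, 2⁻ᵏR)` is
admissible for `2a`, the integral of `|Ω(x-·) f|` over it is at most `γ(B(x, 2⁻ᵏR))^(1-βᵢ) Mᵢ`.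
Hence the `k`-th term is bounded both by `(c qᵏ)^(β-β₁) M₁` and by `(c qᵏ)^(-(β₂-β)) M₂`.
The minimum of these two geometric sequences sums to a constant times their value at the scale
where they cross, which is `M₁^((β₂-β)/(β₂-β₁)) M₂^((β-β₁)/(β₂-β₁))`.
-/

open MeasureTheory ENNReal Real Set Metric
open scoped Classical

noncomputable section

/-- ℝ^d with the Euclidean norm. -/
abbrev Euc (d : ℕ) := EuclideanSpace ℝ (Fin d)

/-- The Gaussian measure dγ(x) = π^{-d/2} e^{-|x|²} dx. -/
def gaussMeasure (d : ℕ) : Measure (Euc d) :=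
  volume.withDensity fun x => ENNReal.ofReal (Real.pi ^ (-(d : ℝ) / 2) * Real.exp (-‖x‖ ^ 2))

/-- m(x) = min(1, 1/|x|) (with value 1 at x = 0). -/
def adm {d : ℕ} (x : Euc d) : ℝ := if ‖x‖ ≤ 1 then 1 else ‖x‖⁻¹

/-- `B(c,r) ∈ 𝓑_a`: the admissibility condition for a ball of center `c` and radius `r`. -/
def IsAdm {d : ℕ} (a : ℝ) (c : Euc d) (r : ℝ) : Prop := 0 < r ∧ r < a * adm c

/-- The surface measure σ on the unit sphere S^{d-1}. -/
def sphereMeasure (d : ℕ) : Measure (sphere (0 : Euc d) 1) :=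
  (volume : Measure (Euc d)).toSphere

/-- The local fractional maximal operator with rough kernel Ω:
M_{Ω,β}^a(f)(x) = sup_{B∈𝓑_a(x)} γ(B)^{β-1} ∫_B |Ω(x-y)||f(y)| dγ(y). -/
def roughMax {d : ℕ} (a β : ℝ) (Ω f : Euc d → ℝ) (x : Euc d) : ℝ≥0∞ :=
  ⨆ (c : Euc d) (r : ℝ) (_ : IsAdm a c r) (_ : x ∈ ball c r),
    (gaussMeasure d (ball c r)) ^ (β - 1) *
      ∫⁻ y in ball c r, ENNReal.ofReal |Ω (x - y)| * ENNReal.ofReal |f y| ∂gaussMeasure d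

/-- The local fractional integral operator with rough kernel Ω:
I_{Ω,β}^a(f)(x) = ∫_{B(x,a m(x))} Ω(x-y) f(y) γ(B(x,|x-y|))^{β-1} dγ(y). -/
def roughIfrac {d : ℕ} (a β : ℝ) (Ω f : Euc d → ℝ) (x : Euc d) : ℝ :=
  ∫ y in ball x (a * adm x),
    Ω (x - y) * f y * ((gaussMeasure d (ball x ‖x - y‖)).toReal) ^ (β - 1) ∂gaussMeasure d

open Filter Topology

namespace ENNReal

theorem rpow_le_rpow_of_nonpos {x y : ℝ≥0∞} {z : ℝ} (hxy : x ≤ y) (hz : z ≤ 0) :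
    y ^ z ≤ x ^ z := by
  rw [← neg_neg z, rpow_neg y, rpow_neg x]
  exact ENNReal.inv_le_inv.mpr (rpow_le_rpow hxy (neg_nonneg.mpr hz))

theorem pow_rpow_comm (x : ℝ≥0∞) (n : ℕ) (z : ℝ) : (x ^ n) ^ z = (x ^ z) ^ n := by
  rw [← rpow_natCast_mul, mul_comm, rpow_mul_natCast]

theorem rpow_neg_le_of_one_le_mul {v w : ℝ≥0∞} {δ : ℝ} (hδ : 0 < δ) (hw0 : w ≠ 0) (hw : w ≠ ⊤)
    (h : 1 ≤ v * w) : v ^ (-δ) ≤ w ^ δ := by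
  rw [rpow_neg, inv_le_iff_le_mul (fun h' => absurd h' (rpow_ne_top_of_nonneg hδ.le hw))
    (fun _ => (rpow_pos (pos_iff_ne_zero.mpr hw0) hw).ne'), ← mul_rpow_of_nonneg _ _ hδ.le]
  exact one_le_rpow h hδ

theorem tsum_min_rpow_geom_le {q u : ℝ≥0∞} (hq0 : q ≠ 0) (hq1 : q < 1) (hu : u ≠ ⊤)
    {α δ : ℝ} (hα : 0 < α) (hδ : 0 < δ) :
    ∑' k : ℕ, min ((u * q ^ k) ^ α) ((u * q ^ k) ^ (-δ)) ≤
      (1 - q ^ δ)⁻¹ + (1 - q ^ α)⁻¹ := by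
  have hq : q ≠ ⊤ := hq1.ne_top
  have hsmall : ∃ k : ℕ, u * q ^ k ≤ 1 := by
    have h : Tendsto (fun k : ℕ => u * q ^ k) atTop (𝓝 0) := by
      simpa using ENNReal.Tendsto.const_mul (tendsto_pow_atTop_nhds_zero_of_lt_one hq1) (.inr hu)
    exact (h.eventually (gt_mem_nhds zero_lt_one)).exists.imp fun _ => le_of_lt
  -- Split at the first `n` with `u * q ^ n ≤ 1`: below it the second branch of the minimum is
  -- geometric in `q ^ δ` (read backwards), from it on the first one is geometric in `q ^ α`.
  set n := Nat.find hsmall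
  rw [← (ENNReal.summable).sum_add_tsum_nat_add' (k := n)]
  refine add_le_add ?_ ?_
  · rw [← ENNReal.tsum_geometric (q ^ δ), ← Finset.sum_range_reflect]
    refine (Finset.sum_le_sum fun k hk => ?_).trans (ENNReal.sum_le_tsum _)
    have hk : k < n := Finset.mem_range.mp hk
    have hbig : 1 ≤ u * q ^ (n - 1 - k) * q ^ k := by
      rw [mul_assoc, ← pow_add, show n - 1 - k + k = n - 1 by omega]
      exact (not_le.mp (Nat.find_min hsmall (show n - 1 < n by omega))).le
    rw [← pow_rpow_comm]
    exact (min_le_right _ _).trans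
      (rpow_neg_le_of_one_le_mul hδ (pow_ne_zero _ hq0) (pow_ne_top hq) hbig)
  · rw [← ENNReal.tsum_geometric (q ^ α)]
    refine ENNReal.tsum_le_tsum fun k => (min_le_left _ _).trans ?_
    have hle : u * q ^ (k + n) ≤ q ^ k := by
      rw [pow_add, mul_left_comm]
      exact mul_le_of_le_one_right' (Nat.find_spec hsmall)
    rw [← pow_rpow_comm]
    exact rpow_le_rpow hle hα.le

theorem inv_one_sub_rpow_ne_top {q : ℝ≥0∞} (hq1 : q < 1) {z : ℝ} (hz : 0 < z) :
    (1 - q ^ z)⁻¹ ≠ ⊤ :=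
  inv_ne_top.mpr (tsub_pos_of_lt (rpow_lt_one hq1 hz)).ne'

theorem ofReal_toReal_rpow_le_of_nonpos {w g : ℝ≥0∞} {p : ℝ} (hp : p ≤ 0) (hg : g ≠ 0)
    (hw : w ≠ ⊤) (h : g ≤ w) : ENNReal.ofReal (w.toReal ^ p) ≤ g ^ p := by
  rw [toReal_rpow, ofReal_toReal (rpow_ne_top_of_nonneg' ((pos_iff_ne_zero.2 hg).trans_le h) hw)]
  exact rpow_le_rpow_of_nonpos h hp

theorem rpow_sub_one_mul_le_of_comparable {L U q u g₀ g₁ P M : ℝ≥0∞} {β β₁ β' : ℝ}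
    (hL : L ≠ ⊤) (hq : q ≠ ⊤) (hU : 1 ≤ U) (hu0 : u ≠ 0) (hu : u ≠ ⊤) (hβ : β ≤ 1)
    (hβ₁ : β₁ ≤ β') (hβ' : β' ≤ 1) (hg₁ : L * (u * q) ≤ g₁) (hg₀ : g₀ ≤ U * u)
    (hP : P ≤ g₀ ^ (1 - β') * M) :
    g₁ ^ (β - 1) * P ≤ (L * q) ^ (β - 1) * U ^ (1 - β₁) * (u ^ (β - β') * M) := by
  calc g₁ ^ (β - 1) * P ≤ (L * (u * q)) ^ (β - 1) * ((U * u) ^ (1 - β') * M) := by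
        gcongr ?_ * ?_
        · exact rpow_le_rpow_of_nonpos hg₁ (by linarith)
        · exact hP.trans (by gcongr)
    _ = (L * q) ^ (β - 1) * U ^ (1 - β') * (u ^ (β - β') * M) := by
        rw [show L * (u * q) = u * (L * q) by ring, mul_rpow_of_ne_top hu (mul_ne_top hL hq),
          mul_rpow_of_nonneg _ _ (by linarith : (0 : ℝ) ≤ 1 - β'),
          show β - β' = (β - 1) + (1 - β') by ring, rpow_add _ _ hu0 hu]
        ring
    _ ≤ _ := by gcongr

theorem exists_rpow_balance {M₁ M₂ : ℝ≥0∞} (h₁0 : M₁ ≠ 0) (h₁ : M₁ ≠ ⊤) (h₂0 : M₂ ≠ 0)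
    (h₂ : M₂ ≠ ⊤) {α δ : ℝ} (hαδ : 0 < α + δ) :
    ∃ T : ℝ≥0∞, T ≠ 0 ∧ T ≠ ⊤ ∧ T ^ α * M₁ = M₁ ^ (δ / (α + δ)) * M₂ ^ (α / (α + δ)) ∧
      T ^ (-δ) * M₂ = M₁ ^ (δ / (α + δ)) * M₂ ^ (α / (α + δ)) := by
  have hpos₁ := pos_iff_ne_zero.mpr h₁0
  have hpos₂ := pos_iff_ne_zero.mpr h₂0
  have hT : ∀ z : ℝ, (M₁ ^ (-(α + δ)⁻¹) * M₂ ^ (α + δ)⁻¹) ^ z =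
      M₁ ^ (-(α + δ)⁻¹ * z) * M₂ ^ ((α + δ)⁻¹ * z) := fun z => by
    rw [mul_rpow_of_ne_top (rpow_ne_top_of_nonneg' hpos₁ h₁) (rpow_ne_top_of_nonneg' hpos₂ h₂),
      rpow_mul, rpow_mul]
  refine ⟨M₁ ^ (-(α + δ)⁻¹) * M₂ ^ (α + δ)⁻¹,
    mul_ne_zero (rpow_pos hpos₁ h₁).ne' (rpow_pos hpos₂ h₂).ne',
    mul_ne_top (rpow_ne_top_of_nonneg' hpos₁ h₁) (rpow_ne_top_of_nonneg' hpos₂ h₂), ?_, ?_⟩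
  · rw [hT, mul_right_comm]
    nth_rewrite 2 [← rpow_one M₁]
    rw [← rpow_add _ _ h₁0 h₁]
    congr 2
    · field_simp; ring
    · field_simp
  · rw [hT, mul_assoc]
    nth_rewrite 2 [← rpow_one M₂]
    rw [← rpow_add _ _ h₂0 h₂]
    congr 2
    · field_simp
    · field_simp; ring

theorem tsum_min_le_mul_rpow_mul_rpow {q c M₁ M₂ : ℝ≥0∞} (hq0 : q ≠ 0) (hq1 : q < 1)
    (hc : c ≠ ⊤) {α δ : ℝ} (hα : 0 < α) (hδ : 0 < δ) :
    ∑' k : ℕ, min ((c * q ^ k) ^ α * M₁) ((c * q ^ k) ^ (-δ) * M₂) ≤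
      ((1 - q ^ δ)⁻¹ + (1 - q ^ α)⁻¹) * (M₁ ^ (δ / (α + δ)) * M₂ ^ (α / (α + δ))) := by
  have hαδ : 0 < α + δ := add_pos hα hδ
  have hS : (1 - q ^ δ)⁻¹ + (1 - q ^ α)⁻¹ ≠ 0 :=
    (add_pos_of_pos_of_nonneg (ENNReal.inv_pos.mpr (sub_ne_top one_ne_top)) zero_le).ne'
  rcases eq_or_ne M₁ 0 with rfl | h₁0
  · simp
  rcases eq_or_ne M₂ 0 with rfl | h₂0
  · simp
  rcases eq_or_ne M₁ ⊤ with rfl | h₁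
  · rw [top_rpow_of_pos (div_pos hδ hαδ),
      top_mul (rpow_pos_of_nonneg (pos_iff_ne_zero.2 h₂0) (div_pos hα hαδ).le).ne', mul_top hS]
    exact le_top
  rcases eq_or_ne M₂ ⊤ with rfl | h₂
  · rw [top_rpow_of_pos (div_pos hα hαδ),
      mul_top (rpow_pos_of_nonneg (pos_iff_ne_zero.2 h₁0) (div_pos hδ hαδ).le).ne', mul_top hS]
    exact le_top
  obtain ⟨T, hT0, hT, h₁T, h₂T⟩ := exists_rpow_balance h₁0 h₁ h₂0 h₂ hαδ
  have hcT : c * T⁻¹ ≠ ⊤ := mul_ne_top hc (inv_ne_top.2 hT0)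
  calc ∑' k : ℕ, min ((c * q ^ k) ^ α * M₁) ((c * q ^ k) ^ (-δ) * M₂)
      = ∑' k : ℕ, min ((c * T⁻¹ * q ^ k) ^ α) ((c * T⁻¹ * q ^ k) ^ (-δ)) *
          (M₁ ^ (δ / (α + δ)) * M₂ ^ (α / (α + δ))) := by
        refine tsum_congr fun k => ?_
        have hu : c * T⁻¹ * q ^ k ≠ ⊤ := mul_ne_top hcT (pow_ne_top hq1.ne_top)
        have hk : c * q ^ k = c * T⁻¹ * q ^ k * T := by
          rw [mul_right_comm, mul_assoc _ _ T, ENNReal.inv_mul_cancel hT0 hT, mul_one]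
        rw [hk, mul_rpow_of_ne_top hu hT, mul_rpow_of_ne_top hu hT, mul_assoc (_ ^ α),
          mul_assoc (_ ^ (-δ)), h₁T, h₂T, min_mul_mul_right]
    _ ≤ _ := by
        rw [ENNReal.tsum_mul_right]
        gcongr
        exact tsum_min_rpow_geom_le hq0 hq1 hcT hα hδ

end ENNReal

theorem exists_mem_sdiff_succ {α : Type*} {s : ℕ → Set α} {y : α} (h0 : y ∈ s 0) {n : ℕ}
    (hn : y ∉ s n) : ∃ k, y ∈ s k \ s (k + 1) := by
  induction n with
  | zero => exact absurd h0 hn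
  | succ n ih => exact if h : y ∈ s n then ⟨n, h, hn⟩ else ih h

theorem setLIntegral_ball_le_tsum_dyadic_annulus {X : Type*} [MetricSpace X] [MeasurableSpace X]
    {μ : Measure X} {x : X} (hx : μ {x} = 0) (R : ℝ) (F : X → ℝ≥0∞) :
    ∫⁻ y in ball x R, F y ∂μ ≤
      ∑' k : ℕ, ∫⁻ y in ball x (2⁻¹ ^ k * R) \ ball x (2⁻¹ ^ (k + 1) * R), F y ∂μ := by
  have hr : Tendsto (fun k : ℕ => (2⁻¹ : ℝ) ^ k * R) atTop (𝓝 0) := by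
    simpa using (tendsto_pow_atTop_nhds_zero_of_lt_one (by norm_num : (0 : ℝ) ≤ 2⁻¹)
      (by norm_num)).mul_const R
  have hcover : ball x R \ {x} ⊆ ⋃ k : ℕ, ball x (2⁻¹ ^ k * R) \ ball x (2⁻¹ ^ (k + 1) * R) := by
    rintro y ⟨hy, hyx⟩
    obtain ⟨n, hn⟩ := (hr.eventually (gt_mem_nhds (dist_pos.mpr hyx))).exists
    exact mem_iUnion.mpr (exists_mem_sdiff_succ (s := fun k => ball x (2⁻¹ ^ k * R))
      (by simpa using hy) (fun h => (mem_ball.mp h).not_gt hn))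
  calc ∫⁻ y in ball x R, F y ∂μ = ∫⁻ y in ball x R \ {x}, F y ∂μ :=
        setLIntegral_congr (sdiff_null_ae_eq_self hx).symm
    _ ≤ _ := lintegral_mono_set hcover
    _ ≤ _ := lintegral_iUnion_le _ _

theorem volume_ball_two_inv_pow_mul {d : ℕ} (x : Euc d) (R : ℝ) (k : ℕ) :
    volume (ball x (2⁻¹ ^ k * R)) = ENNReal.ofReal (2⁻¹ ^ d) ^ k * volume (ball x R) := by
  rw [Measure.addHaar_ball_mul_of_pos _ _ (by positivity), finrank_euclideanSpace_fin,
    ← Measure.addHaar_ball_center, ← ofReal_pow (by norm_num), pow_right_comm]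

theorem adm_pos {d : ℕ} (x : Euc d) : 0 < adm x := by
  unfold adm
  split_ifs with h
  · exact one_pos
  · exact inv_pos.mpr (one_pos.trans (not_le.mp h))

theorem adm_le_one {d : ℕ} (x : Euc d) : adm x ≤ 1 := by
  unfold adm
  split_ifs with h
  · exact le_rfl
  · exact inv_le_one_of_one_le₀ (not_le.mp h).le

theorem adm_mul_norm_le_one {d : ℕ} (x : Euc d) : adm x * ‖x‖ ≤ 1 := by
  unfold adm
  split_ifs with h
  · simpa using h
  · rw [inv_mul_cancel₀ (one_pos.trans (not_le.mp h)).ne']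

theorem abs_norm_sq_sub_norm_sq_le {d : ℕ} {x y : Euc d} {b : ℝ} (hb : 0 ≤ b)
    (h : dist y x ≤ b * adm x) : |‖y‖ ^ 2 - ‖x‖ ^ 2| ≤ b * (2 + b) := by
  have ht : dist y x ≤ b := h.trans (mul_le_of_le_one_right hb (adm_le_one x))
  have htx : dist y x * ‖x‖ ≤ b := by
    calc dist y x * ‖x‖ ≤ b * (adm x * ‖x‖) := by
          rw [← mul_assoc]; exact mul_le_mul_of_nonneg_right h (norm_nonneg x)
      _ ≤ b := mul_le_of_le_one_right hb (adm_mul_norm_le_one x)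
  have hyx : |‖y‖ - ‖x‖| ≤ dist y x := by
    rw [dist_eq_norm]; exact abs_norm_sub_norm_le y x
  have hsum : ‖y‖ + ‖x‖ ≤ 2 * ‖x‖ + dist y x := by linarith [(abs_le.mp hyx).2]
  rw [sq_sub_sq, abs_mul, abs_of_nonneg (by positivity)]
  calc (‖y‖ + ‖x‖) * |‖y‖ - ‖x‖| ≤ (2 * ‖x‖ + dist y x) * dist y x :=
        mul_le_mul hsum hyx (abs_nonneg _) (by positivity)
    _ = 2 * (dist y x * ‖x‖) + dist y x * dist y x := by ring
    _ ≤ b * (2 + b) := by nlinarith [dist_nonneg (x := y) (y := x)]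

def gaussDensity (d : ℕ) (x : Euc d) : ℝ := π ^ (-(d : ℝ) / 2) * exp (-‖x‖ ^ 2)

theorem gaussMeasure_apply {d : ℕ} {s : Set (Euc d)} (hs : MeasurableSet s) :
    gaussMeasure d s = ∫⁻ y in s, ENNReal.ofReal (gaussDensity d y) :=
  withDensity_apply _ hs

theorem gaussDensity_pos {d : ℕ} (y : Euc d) : 0 < gaussDensity d y := by
  unfold gaussDensity; positivity

theorem gaussDensity_le {d : ℕ} (y : Euc d) : gaussDensity d y ≤ π ^ (-(d : ℝ) / 2) :=
  mul_le_of_le_one_right (by positivity) (exp_le_one_iff.mpr (by nlinarith [norm_nonneg y]))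

theorem gaussDensity_eq_exp_mul {d : ℕ} (x y : Euc d) :
    gaussDensity d y = exp (-(‖y‖ ^ 2 - ‖x‖ ^ 2)) * gaussDensity d x := by
  rw [gaussDensity, gaussDensity, mul_left_comm, ← exp_add]
  ring_nf

theorem gaussMeasure_ball_ne_top {d : ℕ} (x : Euc d) (r : ℝ) : gaussMeasure d (ball x r) ≠ ⊤ := by
  refine ne_of_lt ?_
  calc gaussMeasure d (ball x r) ≤ ENNReal.ofReal (π ^ (-(d : ℝ) / 2)) * volume (ball x r) := by
        rw [gaussMeasure_apply measurableSet_ball, ← setLIntegral_const]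
        exact setLIntegral_mono' measurableSet_ball fun y _ => ofReal_le_ofReal (gaussDensity_le y)
    _ < ⊤ := mul_lt_top ofReal_lt_top measure_ball_lt_top

theorem gaussMeasure_ball_ne_zero {d : ℕ} (x : Euc d) {r : ℝ} (hr : 0 < r) :
    gaussMeasure d (ball x r) ≠ 0 := by
  have hac : volume ≪ gaussMeasure d := withDensity_absolutelyContinuous' (by fun_prop)
    (ae_of_all _ fun y => (ofReal_pos.mpr (gaussDensity_pos y)).ne')
  exact fun h => (measure_ball_pos volume x hr).ne' (hac h)

theorem gaussMeasure_singleton {d : ℕ} (hd : 0 < d) (x : Euc d) : gaussMeasure d {x} = 0 := by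
  have : Nonempty (Fin d) := ⟨⟨0, hd⟩⟩
  exact withDensity_absolutelyContinuous _ _ (measure_singleton x)

theorem gaussDensity_comparable {d : ℕ} {x y : Euc d} {b : ℝ} (hb : 0 ≤ b)
    (h : dist y x ≤ b * adm x) :
    exp (-(b * (2 + b))) * gaussDensity d x ≤ gaussDensity d y ∧
      gaussDensity d y ≤ exp (b * (2 + b)) * gaussDensity d x := by
  have hsq := abs_le.mp (abs_norm_sq_sub_norm_sq_le hb h)
  have := gaussDensity_pos x
  rw [gaussDensity_eq_exp_mul x y]
  constructor <;> gcongr <;> linarith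

theorem gaussMeasure_ball_le {d : ℕ} {x : Euc d} {b t : ℝ} (hb : 0 ≤ b) (ht : t ≤ b * adm x) :
    gaussMeasure d (ball x t) ≤
      ENNReal.ofReal (exp (b * (2 + b)) * gaussDensity d x) * volume (ball x t) := by
  rw [gaussMeasure_apply measurableSet_ball, ← setLIntegral_const]
  exact setLIntegral_mono' measurableSet_ball fun y hy =>
    ofReal_le_ofReal (gaussDensity_comparable hb ((mem_ball.mp hy).le.trans ht)).2

theorem le_gaussMeasure_ball {d : ℕ} {x : Euc d} {b t : ℝ} (hb : 0 ≤ b) (ht : t ≤ b * adm x) :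
    ENNReal.ofReal (exp (-(b * (2 + b))) * gaussDensity d x) * volume (ball x t) ≤
      gaussMeasure d (ball x t) := by
  rw [gaussMeasure_apply measurableSet_ball, ← setLIntegral_const]
  exact setLIntegral_mono' measurableSet_ball fun y hy =>
    ofReal_le_ofReal (gaussDensity_comparable hb ((mem_ball.mp hy).le.trans ht)).1

theorem two_inv_pow_mul_le {R : ℝ} (hR : 0 ≤ R) (k : ℕ) : 2⁻¹ ^ k * R ≤ R :=
  mul_le_of_le_one_left hR (pow_le_one₀ (by norm_num) (by norm_num))

theorem gaussMeasure_dyadic_ball_le {d : ℕ} {a : ℝ} (ha : 0 ≤ a) (x : Euc d) (k : ℕ) :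
    gaussMeasure d (ball x (2⁻¹ ^ k * (a * adm x))) ≤ ENNReal.ofReal (exp (a * (2 + a))) *
      (ENNReal.ofReal (gaussDensity d x) * volume (ball x (a * adm x)) *
        ENNReal.ofReal (2⁻¹ ^ d) ^ k) := by
  refine (gaussMeasure_ball_le ha (two_inv_pow_mul_le (mul_nonneg ha (adm_pos x).le) k)).trans_eq ?_
  rw [ofReal_mul (exp_pos _).le, volume_ball_two_inv_pow_mul]
  ring

theorem le_gaussMeasure_dyadic_ball {d : ℕ} {a : ℝ} (ha : 0 ≤ a) (x : Euc d) (k : ℕ) :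
    ENNReal.ofReal (exp (-(a * (2 + a)))) *
      (ENNReal.ofReal (gaussDensity d x) * volume (ball x (a * adm x)) *
        ENNReal.ofReal (2⁻¹ ^ d) ^ k) ≤ gaussMeasure d (ball x (2⁻¹ ^ k * (a * adm x))) := by
  refine (le_gaussMeasure_ball ha
    (two_inv_pow_mul_le (mul_nonneg ha (adm_pos x).le) k)).trans_eq' ?_
  rw [ofReal_mul (exp_pos _).le, volume_ball_two_inv_pow_mul]
  ring

theorem le_roughMax {d : ℕ} {a β : ℝ} {Ω f : Euc d → ℝ} {c x : Euc d} {r : ℝ} (hr : IsAdm a c r)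
    (hx : x ∈ ball c r) :
    gaussMeasure d (ball c r) ^ (β - 1) *
        ∫⁻ y in ball c r, ENNReal.ofReal |Ω (x - y)| * ENNReal.ofReal |f y| ∂gaussMeasure d ≤
      roughMax a β Ω f x :=
  le_iSup_of_le c <| le_iSup_of_le r <| le_iSup_of_le hr <| le_iSup_of_le hx le_rfl

theorem lintegral_ball_le_rpow_mul_roughMax {d : ℕ} {a β : ℝ} {Ω f : Euc d → ℝ} {x : Euc d}
    {r : ℝ} (hr : IsAdm a x r) :
    ∫⁻ y in ball x r, ENNReal.ofReal |Ω (x - y)| * ENNReal.ofReal |f y| ∂gaussMeasure d ≤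
      gaussMeasure d (ball x r) ^ (1 - β) * roughMax a β Ω f x := by
  have h0 := gaussMeasure_ball_ne_zero x hr.1
  have htop := gaussMeasure_ball_ne_top x r
  calc _ = gaussMeasure d (ball x r) ^ (1 - β) * (gaussMeasure d (ball x r) ^ (β - 1) *
          ∫⁻ y in ball x r, ENNReal.ofReal |Ω (x - y)| * ENNReal.ofReal |f y| ∂gaussMeasure d) := by
        rw [← mul_assoc, ← rpow_add _ _ h0 htop, sub_add_sub_cancel', sub_self, ENNReal.rpow_zero,
          one_mul]
    _ ≤ _ := by gcongr; exact le_roughMax hr (mem_ball_self hr.1)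

theorem isAdm_two_mul_dyadic {d : ℕ} {a : ℝ} (ha : 0 < a) (x : Euc d) (k : ℕ) :
    IsAdm (2 * a) x (2⁻¹ ^ k * (a * adm x)) := by
  have := mul_pos ha (adm_pos x)
  exact ⟨by positivity, (two_inv_pow_mul_le this.le k).trans_lt (by linarith)⟩

theorem ofReal_abs_roughIfrac_le_lintegral {d : ℕ} (a β : ℝ) (Ω f : Euc d → ℝ) (x : Euc d) :
    ENNReal.ofReal |roughIfrac a β Ω f x| ≤
      ∫⁻ y in ball x (a * adm x), ENNReal.ofReal |Ω (x - y)| * ENNReal.ofReal |f y| *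
        ENNReal.ofReal ((gaussMeasure d (ball x ‖x - y‖)).toReal ^ (β - 1)) ∂gaussMeasure d := by
  rw [roughIfrac, ← Real.enorm_eq_ofReal_abs]
  refine (enorm_integral_le_lintegral_enorm _).trans_eq (lintegral_congr fun y => ?_)
  rw [Real.enorm_eq_ofReal_abs, abs_mul, abs_mul, abs_of_nonneg (rpow_nonneg toReal_nonneg _),
    ofReal_mul (mul_nonneg (abs_nonneg _) (abs_nonneg _)), ofReal_mul (abs_nonneg _)]

theorem ofReal_abs_roughIfrac_le_tsum {d : ℕ} (hd : 0 < d) {a β : ℝ} (ha : 0 < a) (hβ : β ≤ 1)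
    (Ω f : Euc d → ℝ) (x : Euc d) :
    ENNReal.ofReal |roughIfrac a β Ω f x| ≤
      ∑' k : ℕ, gaussMeasure d (ball x (2⁻¹ ^ (k + 1) * (a * adm x))) ^ (β - 1) *
        ∫⁻ y in ball x (2⁻¹ ^ k * (a * adm x)),
          ENNReal.ofReal |Ω (x - y)| * ENNReal.ofReal |f y| ∂gaussMeasure d := by
  refine (ofReal_abs_roughIfrac_le_lintegral a β Ω f x).trans <|
    (setLIntegral_ball_le_tsum_dyadic_annulus (gaussMeasure_singleton hd x) _ _).trans <|
      ENNReal.tsum_le_tsum fun k => ?_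
  set R := a * adm x
  set g := gaussMeasure d (ball x (2⁻¹ ^ (k + 1) * R))
  have hg0 : g ≠ 0 := gaussMeasure_ball_ne_zero x (by positivity [adm_pos x])
  have hgtop : g ≠ ⊤ := gaussMeasure_ball_ne_top x _
  calc _ ≤ ∫⁻ y in ball x (2⁻¹ ^ k * R) \ ball x (2⁻¹ ^ (k + 1) * R),
          g ^ (β - 1) * (ENNReal.ofReal |Ω (x - y)| * ENNReal.ofReal |f y|) ∂gaussMeasure d := by
        refine setLIntegral_mono' (measurableSet_ball.diff measurableSet_ball) fun y hy => ?_
        have hry : 2⁻¹ ^ (k + 1) * R ≤ ‖x - y‖ := by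
          rw [← dist_eq_norm, dist_comm]; exact not_lt.mp hy.2
        rw [mul_comm (_ ^ _)]
        exact mul_le_mul_right (ENNReal.ofReal_toReal_rpow_le_of_nonpos (by linarith) hg0
          (gaussMeasure_ball_ne_top x _) (measure_mono (ball_subset_ball hry))) _
    _ = g ^ (β - 1) * ∫⁻ y in ball x (2⁻¹ ^ k * R) \ ball x (2⁻¹ ^ (k + 1) * R),
          ENNReal.ofReal |Ω (x - y)| * ENNReal.ofReal |f y| ∂gaussMeasure d :=
        lintegral_const_mul' _ _ (rpow_ne_top_of_nonneg' (pos_iff_ne_zero.2 hg0) hgtop)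
    _ ≤ _ := by gcongr; exact sdiff_subset

theorem exists_dyadic_term_le {d : ℕ} (hd : 0 < d) {a : ℝ} (ha : 0 < a) {β β₁ β₂ : ℝ}
    (h12 : β₁ < β) (h2 : β < β₂) (hβ2 : β₂ ≤ 1) :
    ∃ D q : ℝ≥0∞, D ≠ ⊤ ∧ q ≠ 0 ∧ q < 1 ∧ ∀ (Ω f : Euc d → ℝ) (x : Euc d),
      ∃ c : ℝ≥0∞, c ≠ ⊤ ∧ ∀ k : ℕ,
        gaussMeasure d (ball x (2⁻¹ ^ (k + 1) * (a * adm x))) ^ (β - 1) *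
            ∫⁻ y in ball x (2⁻¹ ^ k * (a * adm x)),
              ENNReal.ofReal |Ω (x - y)| * ENNReal.ofReal |f y| ∂gaussMeasure d ≤
          D * min ((c * q ^ k) ^ (β - β₁) * roughMax (2 * a) β₁ Ω f x)
            ((c * q ^ k) ^ (-(β₂ - β)) * roughMax (2 * a) β₂ Ω f x) := by
  set L := ENNReal.ofReal (exp (-(a * (2 + a))))
  set U := ENNReal.ofReal (exp (a * (2 + a)))
  set q := ENNReal.ofReal (2⁻¹ ^ d)
  have hq0 : q ≠ 0 := (ofReal_pos.mpr (by positivity)).ne'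
  have hq1 : q < 1 := ofReal_lt_one.mpr (pow_lt_one₀ (by norm_num) (by norm_num) hd.ne')
  have hU : 1 ≤ U := one_le_ofReal.mpr (one_le_exp (by positivity))
  have hD : (L * q) ^ (β - 1) * U ^ (1 - β₁) ≠ ⊤ :=
    mul_ne_top (rpow_ne_top_of_nonneg' (ENNReal.mul_pos (ofReal_pos.mpr (exp_pos _)).ne' hq0)
      (mul_ne_top ofReal_ne_top hq1.ne_top)) (rpow_ne_top_of_nonneg (by linarith) ofReal_ne_top)
  refine ⟨_, q, hD, hq0, hq1, fun Ω f x => ?_⟩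
  set c := ENNReal.ofReal (gaussDensity d x) * volume (ball x (a * adm x))
  have hc0 : c ≠ 0 := mul_ne_zero (ofReal_pos.mpr (gaussDensity_pos x)).ne'
    (measure_ball_pos volume x (mul_pos ha (adm_pos x))).ne'
  have hc : c ≠ ⊤ := mul_ne_top ofReal_ne_top measure_ball_lt_top.ne
  refine ⟨c, hc, fun k => ?_⟩
  have hterm : ∀ β', β₁ ≤ β' → β' ≤ 1 →
      gaussMeasure d (ball x (2⁻¹ ^ (k + 1) * (a * adm x))) ^ (β - 1) *
          ∫⁻ y in ball x (2⁻¹ ^ k * (a * adm x)),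
            ENNReal.ofReal |Ω (x - y)| * ENNReal.ofReal |f y| ∂gaussMeasure d ≤
        (L * q) ^ (β - 1) * U ^ (1 - β₁) * ((c * q ^ k) ^ (β - β') * roughMax (2 * a) β' Ω f x) :=
    fun β' hβ₁ hβ' => ENNReal.rpow_sub_one_mul_le_of_comparable ofReal_ne_top hq1.ne_top hU
      (mul_ne_zero hc0 (pow_ne_zero _ hq0)) (mul_ne_top hc (pow_ne_top hq1.ne_top)) (by linarith)
      hβ₁ hβ' ((le_gaussMeasure_dyadic_ball ha.le x (k + 1)).trans_eq' (by ring))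
      (gaussMeasure_dyadic_ball_le ha.le x k)
      (lintegral_ball_le_rpow_mul_roughMax (isAdm_two_mul_dyadic ha x k))
  rw [mul_min]
  exact le_min (hterm β₁ le_rfl (by linarith))
    (by simpa only [neg_sub] using hterm β₂ (by linarith) hβ2)

theorem stmt12_general {d : ℕ} (hd : 0 < d) (a : ℝ) (ha : 0 < a)
    (β β₁ β₂ : ℝ) (h12 : β₁ < β) (h2 : β < β₂) (hβ2 : β₂ ≤ 1)
    (Ω : Euc d → ℝ) :
    ∃ C : ℝ≥0∞, C ≠ ⊤ ∧ ∀ f : Euc d → ℝ, LocallyIntegrable f (gaussMeasure d) →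
      ∀ x : Euc d,
        ENNReal.ofReal |roughIfrac a β Ω f x| ≤
          C * (roughMax (2 * a) β₁ Ω f x) ^ ((β₂ - β) / (β₂ - β₁)) *
            (roughMax (2 * a) β₂ Ω f x) ^ ((β - β₁) / (β₂ - β₁)) := by
  obtain ⟨D, q, hD, hq0, hq1, hdyadic⟩ := exists_dyadic_term_le hd ha h12 h2 hβ2
  refine ⟨D * ((1 - q ^ (β₂ - β))⁻¹ + (1 - q ^ (β - β₁))⁻¹), mul_ne_top hD
    (add_ne_top.mpr ⟨inv_one_sub_rpow_ne_top hq1 (sub_pos.2 h2),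
      inv_one_sub_rpow_ne_top hq1 (sub_pos.2 h12)⟩), fun f _ x => ?_⟩
  obtain ⟨c, hc, hterm⟩ := hdyadic Ω f x
  have hexp : β - β₁ + (β₂ - β) = β₂ - β₁ := by ring
  calc ENNReal.ofReal |roughIfrac a β Ω f x|
      ≤ ∑' k : ℕ, D * min ((c * q ^ k) ^ (β - β₁) * roughMax (2 * a) β₁ Ω f x)
          ((c * q ^ k) ^ (-(β₂ - β)) * roughMax (2 * a) β₂ Ω f x) :=
        (ofReal_abs_roughIfrac_le_tsum hd ha (by linarith) Ω f x).trans (ENNReal.tsum_le_tsum hterm)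
    _ ≤ D * (((1 - q ^ (β₂ - β))⁻¹ + (1 - q ^ (β - β₁))⁻¹) *
          ((roughMax (2 * a) β₁ Ω f x) ^ ((β₂ - β) / (β₂ - β₁)) *
            (roughMax (2 * a) β₂ Ω f x) ^ ((β - β₁) / (β₂ - β₁)))) := by
        rw [ENNReal.tsum_mul_left]
        gcongr
        simpa only [hexp] using
          ENNReal.tsum_min_le_mul_rpow_mul_rpow hq0 hq1 hc (sub_pos.2 h12) (sub_pos.2 h2)
    _ = _ := by ring

/-- pointwise bound of the local rough fractional integral by a product of
local rough fractional maximal functions. -/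
theorem stmt12 {d : ℕ} (hd : 0 < d) (a : ℝ) (ha : 0 < a)
    (β β₁ β₂ : ℝ) (hβ1 : 0 ≤ β₁) (h12 : β₁ < β) (h2 : β < β₂) (hβ2 : β₂ ≤ 1)
    (s : ℝ) (hs : 1 < s)
    (Ω : Euc d → ℝ) (hΩm : Measurable Ω)
    (hΩh : ∀ (t : ℝ) (x : Euc d), 0 < t → x ≠ 0 → Ω (t • x) = Ω x)
    (hΩs : (∫⁻ z : sphere (0 : Euc d) 1,
        ENNReal.ofReal |Ω ↑z| ^ s ∂sphereMeasure d) < ⊤) :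
    ∃ C : ℝ≥0∞, C ≠ ⊤ ∧ ∀ f : Euc d → ℝ, LocallyIntegrable f (gaussMeasure d) →
      ∀ x : Euc d,
        ENNReal.ofReal |roughIfrac a β Ω f x| ≤
          C * (roughMax (2 * a) β₁ Ω f x) ^ ((β₂ - β) / (β₂ - β₁)) *
            (roughMax (2 * a) β₂ Ω f x) ^ ((β - β₁) / (β₂ - β₁)) :=
  stmt12_general hd a ha β β₁ β₂ h12 h2 hβ2 Ω
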